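/- arXiv:2010.10508 — 3 statements merged into one kernel-verified Lean document; each statement's English description precedes it below -/
import Mathlib

section
/- Let K1 and K2 be closed convex cones in R^n such that sup{⟨u,v⟩ : u ∈ (-K1) ∩ S^{n-1}, v ∈ K2 ∩ S^{n-1}} ≤ 1 - β for some β ∈ (0,1]. Then for any u ∈ K1 and v ∈ K2, max{‖u‖, ‖v‖} ≤ ‖u + v‖ / √β. -/
open MeasureTheory ProbabilityTheory Set
open scoped RealInnerProductSpace

noncomputable def stdGaussian (n : ℕ) : Measure (EuclideanSpace ℝ (Fin n)) :=
  Measure.map (EuclideanSpace.equiv (Fin n) ℝ).symm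
    (Measure.pi fun _ : Fin n => gaussianReal 0 1)

/-- Statistical dimension via the sup formulation
`δ(K) = E[(sup{⟪g,y⟫ : y ∈ K ∩ Bⁿ})²]`. -/
noncomputable def statDim {n : ℕ} (K : Set (EuclideanSpace ℝ (Fin n))) : ℝ :=
  ∫ g, (sSup {r : ℝ | ∃ y, y ∈ K ∧ ‖y‖ ≤ 1 ∧ r = ⟪g, y⟫}) ^ 2 ∂(stdGaussian n)

/-- Gauge of an atomic set: `γ_A(x) = inf{λ ≥ 0 : x ∈ λ·conv(A ∪ {0})}`. -/
noncomputable def agauge {n : ℕ} (A : Set (EuclideanSpace ℝ (Fin n)))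
    (x : EuclideanSpace ℝ (Fin n)) : ℝ :=
  gauge (convexHull ℝ (insert 0 A)) x

/-- Descent cone `D(A,x) = cone{d : γ_A(x+d) ≤ γ_A(x)}`. -/
def descCone {n : ℕ} (A : Set (EuclideanSpace ℝ (Fin n))) (x : EuclideanSpace ℝ (Fin n)) :
    Set (EuclideanSpace ℝ (Fin n)) :=
  {d | ∃ c : ℝ, ∃ s, 0 ≤ c ∧ agauge A (x + s) ≤ agauge A x ∧ d = c • s}


/-- If `cos∠(−K₁, K₂) ≤ 1 − β`, then for `u ∈ K₁`, `v ∈ K₂`,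
`max{‖u‖, ‖v‖} ≤ ‖u+v‖/√β`. -/
theorem norm_bound_of_angle {n : ℕ} (K₁ K₂ : Set (EuclideanSpace ℝ (Fin n)))
    (hK₁c : IsClosed K₁) (hK₂c : IsClosed K₂)
    (hK₁conv : Convex ℝ K₁) (hK₂conv : Convex ℝ K₂)
    (hK₁cone : ∀ c : ℝ, 0 ≤ c → ∀ x ∈ K₁, c • x ∈ K₁)
    (hK₂cone : ∀ c : ℝ, 0 ≤ c → ∀ x ∈ K₂, c • x ∈ K₂)
    (β : ℝ) (hβ : β ∈ Set.Ioc (0 : ℝ) 1)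
    (hangle : ∀ u v, u ∈ -K₁ → v ∈ K₂ → ‖u‖ = 1 → ‖v‖ = 1 → ⟪u, v⟫ ≤ 1 - β) :
    ∀ u ∈ K₁, ∀ v ∈ K₂, max ‖u‖ ‖v‖ ≤ ‖u + v‖ / Real.sqrt β := by

  intro u hu v hv
  obtain ⟨hβ0, hβ1⟩ := hβ
  have key : -(1 - β) * (‖u‖ * ‖v‖) ≤ ⟪u, v⟫ := by
    rcases eq_or_ne u 0 with rfl | hu0
    · simp
    rcases eq_or_ne v 0 with rfl | hv0
    · simp
    have hnu : (0 : ℝ) < ‖u‖ := norm_pos_iff.mpr hu0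
    have hnv : (0 : ℝ) < ‖v‖ := norm_pos_iff.mpr hv0
    have h1 : -(‖u‖⁻¹ • u) ∈ -K₁ := by
      rw [Set.mem_neg, neg_neg]
      exact hK₁cone _ (by positivity) u hu
    have h2 : ‖v‖⁻¹ • v ∈ K₂ := hK₂cone _ (by positivity) v hv
    have hn1 : ‖-(‖u‖⁻¹ • u)‖ = 1 := by
      rw [norm_neg, norm_smul, norm_inv, norm_norm, inv_mul_cancel₀ hnu.ne']
    have hn2 : ‖(‖v‖⁻¹ • v)‖ = 1 := by
      rw [norm_smul, norm_inv, norm_norm, inv_mul_cancel₀ hnv.ne']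
    have := hangle _ _ h1 h2 hn1 hn2
    rw [inner_neg_left, real_inner_smul_left, real_inner_smul_right] at this
    have h3 : -(‖u‖⁻¹ * (‖v‖⁻¹ * ⟪u, v⟫)) * (‖u‖ * ‖v‖) ≤ (1 - β) * (‖u‖ * ‖v‖) := by
      apply mul_le_mul_of_nonneg_right this (by positivity)
    have hne : ‖u‖⁻¹ * (‖v‖⁻¹) * (‖u‖ * ‖v‖) = 1 := by
      field_simp
    have h4 : -⟪u, v⟫ = -(‖u‖⁻¹ * (‖v‖⁻¹ * ⟪u, v⟫)) * (‖u‖ * ‖v‖) := by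
      field_simp
    nlinarith [h3, h4]
  have hsq : β * max ‖u‖ ‖v‖ ^ 2 ≤ ‖u + v‖ ^ 2 := by
    have hexp : ‖u + v‖ ^ 2 = ‖u‖ ^ 2 + 2 * ⟪u, v⟫ + ‖v‖ ^ 2 := norm_add_sq_real u v
    rcases max_cases ‖u‖ ‖v‖ with ⟨hm, hle⟩ | ⟨hm, hle⟩ <;> rw [hm] <;>
      nlinarith [norm_nonneg u, norm_nonneg v, sq_nonneg (‖u‖ - ‖v‖)]
  have hsβ : (0 : ℝ) < Real.sqrt β := Real.sqrt_pos.mpr hβ0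
  rw [le_div_iff₀ hsβ]
  nlinarith [Real.sq_sqrt hβ0.le, norm_nonneg (u + v), le_max_left ‖u‖ ‖v‖,
    norm_nonneg u, norm_nonneg v, mul_nonneg (le_max_left ‖u‖ ‖v‖ |>.trans' (norm_nonneg u)) hsβ.le]
end

section
/- Let K1 and K2 be closed convex cones in R^n with cos∠(−K1, K2) ≤ 1 − β for some β ∈ (0,1], where cos∠ denotes the maximal inner product between unit vectors of the respective cones. Then the statistical dimension satisfies √(δ(K1 + K2)) ≤ (√(δ(K1)) + √(δ(K2)))/√β. -/
open scoped Pointwise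

open MeasureTheory ProbabilityTheory Set
open scoped RealInnerProductSpace

/-!
Write `h_K(g) = sup {⟪g, y⟫ : y ∈ K, ‖y‖ ≤ 1}`, so that `δ(K) = E[h_K(g)²]`. The angle condition
gives `-⟪u, v⟫ ≤ (1 - β)‖u‖‖v‖` for `u ∈ K₁`, `v ∈ K₂`, hence `β‖u‖² ≤ ‖u + v‖²` and likewise
for `v`. So if `‖u + v‖ ≤ 1` then `√β u` and `√β v` lie in the unit balls of `K₁` and `K₂`,
and `√β h_{K₁+K₂} ≤ h_{K₁} + h_{K₂}` pointwise. Minkowski's inequality in `L²` of the Gaussian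
measure concludes.
-/

section InnerProductSpace

variable {E : Type*} [NormedAddCommGroup E] [InnerProductSpace ℝ E]

lemma neg_inner_le_of_angle_le {K₁ K₂ : Set E} {β : ℝ}
    (hK₁ : ∀ c : ℝ, 0 ≤ c → ∀ x ∈ K₁, c • x ∈ K₁) (hK₂ : ∀ c : ℝ, 0 ≤ c → ∀ x ∈ K₂, c • x ∈ K₂)
    (hangle : ∀ u v, u ∈ -K₁ → v ∈ K₂ → ‖u‖ = 1 → ‖v‖ = 1 → ⟪u, v⟫ ≤ 1 - β)
    {u v : E} (hu : u ∈ K₁) (hv : v ∈ K₂) :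
    -⟪u, v⟫ ≤ (1 - β) * (‖u‖ * ‖v‖) := by
  rcases eq_or_ne u 0 with rfl | hu0
  · simp
  rcases eq_or_ne v 0 with rfl | hv0
  · simp
  have hu' : 0 < ‖u‖ := norm_pos_iff.2 hu0
  have hv' : 0 < ‖v‖ := norm_pos_iff.2 hv0
  have h := hangle (-(‖u‖⁻¹ • u)) (‖v‖⁻¹ • v)
    (neg_mem_neg.2 (hK₁ _ (inv_nonneg.2 hu'.le) u hu)) (hK₂ _ (inv_nonneg.2 hv'.le) v hv)
    (by rw [norm_neg, norm_smul, Real.norm_of_nonneg (inv_nonneg.2 hu'.le),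
      inv_mul_cancel₀ hu'.ne'])
    (by rw [norm_smul, Real.norm_of_nonneg (inv_nonneg.2 hv'.le), inv_mul_cancel₀ hv'.ne'])
  rw [inner_neg_left, real_inner_smul_left, real_inner_smul_right] at h
  have huv := mul_pos hu' hv'
  calc -⟪u, v⟫ = ‖u‖ * ‖v‖ * -(‖u‖⁻¹ * (‖v‖⁻¹ * ⟪u, v⟫)) := by field_simp
    _ ≤ ‖u‖ * ‖v‖ * (1 - β) := mul_le_mul_of_nonneg_left h huv.le
    _ = (1 - β) * (‖u‖ * ‖v‖) := mul_comm _ _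

lemma sqrt_mul_norm_le_norm_add {β : ℝ} (hβ : β ≤ 1) {u v : E}
    (h : -⟪u, v⟫ ≤ (1 - β) * (‖u‖ * ‖v‖)) :
    √β * ‖u‖ ≤ ‖u + v‖ := by
  rcases le_or_gt β 0 with hβ0 | hβ0
  · simp [Real.sqrt_eq_zero'.2 hβ0]
  rw [← pow_le_pow_iff_left₀ (by positivity) (norm_nonneg _) two_ne_zero, mul_pow,
    Real.sq_sqrt hβ0.le, norm_add_sq_real]
  -- the difference is `(1 - β)(‖u‖ - ‖v‖)² + β‖v‖²`
  nlinarith [mul_nonneg (sub_nonneg.2 hβ) (sq_nonneg (‖u‖ - ‖v‖)),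
    mul_nonneg hβ0.le (sq_nonneg ‖v‖)]

noncomputable def ballSupport (K : Set E) (g : E) : ℝ :=
  sSup {r : ℝ | ∃ y, y ∈ K ∧ ‖y‖ ≤ 1 ∧ r = ⟪g, y⟫}

variable {K : Set E}

lemma inner_le_norm_of_norm_le_one (g : E) {y : E} (hy : ‖y‖ ≤ 1) : ⟪g, y⟫ ≤ ‖g‖ :=
  (real_inner_le_norm g y).trans (mul_le_of_le_one_right (norm_nonneg g) hy)

lemma inner_le_ballSupport (g : E) {y : E} (hy : y ∈ K) (hy1 : ‖y‖ ≤ 1) :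
    ⟪g, y⟫ ≤ ballSupport K g :=
  le_csSup ⟨‖g‖, by rintro r ⟨y, -, hy1, rfl⟩; exact inner_le_norm_of_norm_le_one g hy1⟩
    ⟨y, hy, hy1, rfl⟩

lemma ballSupport_le {g : E} {c : ℝ} (hc : 0 ≤ c) (h : ∀ y ∈ K, ‖y‖ ≤ 1 → ⟪g, y⟫ ≤ c) :
    ballSupport K g ≤ c :=
  Real.sSup_le (by rintro r ⟨y, hy, hy1, rfl⟩; exact h y hy hy1) hc

lemma ballSupport_le_norm (K : Set E) (g : E) : ballSupport K g ≤ ‖g‖ :=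
  ballSupport_le (norm_nonneg g) fun _ _ hy1 => inner_le_norm_of_norm_le_one g hy1

lemma ballSupport_nonneg (hK : ∀ c : ℝ, 0 ≤ c → ∀ x ∈ K, c • x ∈ K) (g : E) :
    0 ≤ ballSupport K g := by
  rcases K.eq_empty_or_nonempty with rfl | ⟨x, hx⟩
  · simp [ballSupport] -- `sSup ∅ = 0` in `ℝ`
  · have h := inner_le_ballSupport g (by simpa using hK 0 le_rfl x hx)
      (norm_zero.trans_le zero_le_one)
    rwa [inner_zero_right] at h

lemma mul_inner_le_ballSupport (hK : ∀ c : ℝ, 0 ≤ c → ∀ x ∈ K, c • x ∈ K) (g : E) {c : ℝ}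
    (hc : 0 ≤ c) {u : E} (hu : u ∈ K) (hcu : c * ‖u‖ ≤ 1) :
    c * ⟪g, u⟫ ≤ ballSupport K g := by
  rw [← real_inner_smul_right]
  refine inner_le_ballSupport g (hK c hc u hu) ?_
  rwa [norm_smul, Real.norm_of_nonneg hc]

lemma lipschitzWith_ballSupport (hK : ∀ c : ℝ, 0 ≤ c → ∀ x ∈ K, c • x ∈ K) :
    LipschitzWith 1 (ballSupport K) := by
  refine LipschitzWith.of_le_add fun a b => ?_
  refine ballSupport_le (add_nonneg (ballSupport_nonneg hK b) dist_nonneg) fun y hy hy1 => ?_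
  rw [dist_eq_norm, ← add_sub_cancel b a, inner_add_left, add_sub_cancel_left]
  exact add_le_add (inner_le_ballSupport b hy hy1) (inner_le_norm_of_norm_le_one _ hy1)

lemma sqrt_mul_ballSupport_add_le {K₁ K₂ : Set E} {β : ℝ}
    (hK₁ : ∀ c : ℝ, 0 ≤ c → ∀ x ∈ K₁, c • x ∈ K₁) (hK₂ : ∀ c : ℝ, 0 ≤ c → ∀ x ∈ K₂, c • x ∈ K₂)
    (hβ : β ∈ Ioc (0 : ℝ) 1) (hsep : ∀ u ∈ K₁, ∀ v ∈ K₂, -⟪u, v⟫ ≤ (1 - β) * (‖u‖ * ‖v‖))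
    (g : E) :
    √β * ballSupport (K₁ + K₂) g ≤ ballSupport K₁ g + ballSupport K₂ g := by
  have hβ' : 0 < √β := Real.sqrt_pos.2 hβ.1
  rw [← le_div_iff₀' hβ']
  refine ballSupport_le (by positivity [ballSupport_nonneg hK₁ g, ballSupport_nonneg hK₂ g]) ?_
  rintro _ ⟨u, hu, v, hv, rfl⟩ (huv : ‖u + v‖ ≤ 1)
  have hu1 : √β * ‖u‖ ≤ 1 := (sqrt_mul_norm_le_norm_add hβ.2 (hsep u hu v hv)).trans huv
  have hv1 : √β * ‖v‖ ≤ 1 := by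
    refine (sqrt_mul_norm_le_norm_add hβ.2 ?_).trans (add_comm u v ▸ huv)
    simpa [real_inner_comm, mul_comm ‖u‖] using hsep u hu v hv
  rw [le_div_iff₀' hβ', inner_add_right, mul_add]
  exact add_le_add (mul_inner_le_ballSupport hK₁ g hβ'.le hu hu1)
    (mul_inner_le_ballSupport hK₂ g hβ'.le hv hv1)

variable [MeasurableSpace E] [BorelSpace E]

lemma memLp_two_ballSupport (hK : ∀ c : ℝ, 0 ≤ c → ∀ x ∈ K, c • x ∈ K) {μ : Measure E}
    (hμ : MemLp id 2 μ) : MemLp (ballSupport K) 2 μ :=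
  hμ.of_le (lipschitzWith_ballSupport hK).continuous.aestronglyMeasurable <|
    ae_of_all _ fun g => by
      rw [Real.norm_of_nonneg (ballSupport_nonneg hK g)]
      exact ballSupport_le_norm K g

end InnerProductSpace

section L2

variable {α : Type*} [MeasurableSpace α] {μ : Measure α}

lemma sqrt_integral_sq_eq_norm_toLp {f : α → ℝ} (hf : MemLp f 2 μ) :
    √(∫ x, f x ^ 2 ∂μ) = ‖hf.toLp f‖ := by
  rw [← Real.sqrt_sq (norm_nonneg (hf.toLp f)), ← real_inner_self_eq_norm_sq, L2.inner_def]
  refine congrArg _ (integral_congr_ae ?_)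
  filter_upwards [hf.coeFn_toLp] with x hx
  simp [hx, sq]

lemma sqrt_integral_sq_le_add {f g k : α → ℝ} (hg : MemLp g 2 μ) (hk : MemLp k 2 μ)
    (hf0 : 0 ≤ᵐ[μ] f) (hf : ∀ᵐ x ∂μ, f x ≤ g x + k x) :
    √(∫ x, f x ^ 2 ∂μ) ≤ √(∫ x, g x ^ 2 ∂μ) + √(∫ x, k x ^ 2 ∂μ) := by
  have hgk := hg.add hk
  calc √(∫ x, f x ^ 2 ∂μ) ≤ √(∫ x, (g + k) x ^ 2 ∂μ) := by
        refine Real.sqrt_le_sqrt (integral_mono_of_nonneg (ae_of_all _ fun x => sq_nonneg _)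
          hgk.integrable_sq ?_)
        filter_upwards [hf0, hf] with x hx0 hx
        exact pow_le_pow_left₀ hx0 hx 2
    _ = ‖hg.toLp g + hk.toLp k‖ := by
        rw [sqrt_integral_sq_eq_norm_toLp hgk, MemLp.toLp_add]
    _ ≤ √(∫ x, g x ^ 2 ∂μ) + √(∫ x, k x ^ 2 ∂μ) := by
        rw [sqrt_integral_sq_eq_norm_toLp hg, sqrt_integral_sq_eq_norm_toLp hk]
        exact norm_add_le _ _

lemma sqrt_integral_mul_sq {c : ℝ} (hc : 0 ≤ c) (f : α → ℝ) :
    √(∫ x, (c * f x) ^ 2 ∂μ) = c * √(∫ x, f x ^ 2 ∂μ) := by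
  simp only [mul_pow, integral_const_mul]
  rw [Real.sqrt_mul (sq_nonneg c), Real.sqrt_sq hc]

end L2

lemma stdGaussian_eq (n : ℕ) :
    _root_.stdGaussian n = ProbabilityTheory.stdGaussian (EuclideanSpace ℝ (Fin n)) :=
  map_pi_eq_stdGaussian

lemma statDim_eq_integral_ballSupport_sq {n : ℕ} (K : Set (EuclideanSpace ℝ (Fin n))) :
    statDim K = ∫ g, ballSupport K g ^ 2 ∂(_root_.stdGaussian n) :=
  rfl

theorem statDim_sum_bound_general {n : ℕ} (K₁ K₂ : Set (EuclideanSpace ℝ (Fin n)))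
    (hK₁cone : ∀ c : ℝ, 0 ≤ c → ∀ x ∈ K₁, c • x ∈ K₁)
    (hK₂cone : ∀ c : ℝ, 0 ≤ c → ∀ x ∈ K₂, c • x ∈ K₂)
    (β : ℝ) (hβ : β ∈ Set.Ioc (0 : ℝ) 1)
    (hangle : ∀ u v, u ∈ -K₁ → v ∈ K₂ → ‖u‖ = 1 → ‖v‖ = 1 → ⟪u, v⟫ ≤ 1 - β) :
    Real.sqrt (statDim (K₁ + K₂)) ≤
      (Real.sqrt (statDim K₁) + Real.sqrt (statDim K₂)) / Real.sqrt β := by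
  have hμ : MemLp id 2 (_root_.stdGaussian n) := stdGaussian_eq n ▸ IsGaussian.memLp_two_id
  have hsep : ∀ u ∈ K₁, ∀ v ∈ K₂, -⟪u, v⟫ ≤ (1 - β) * (‖u‖ * ‖v‖) :=
    fun u hu v hv => neg_inner_le_of_angle_le hK₁cone hK₂cone hangle hu hv
  have hS0 := ballSupport_nonneg (K := K₁ + K₂) fun c hc x hx => by
    obtain ⟨u, hu, v, hv, rfl⟩ := hx
    simpa only [smul_add] using add_mem_add (hK₁cone c hc u hu) (hK₂cone c hc v hv)
  have h := sqrt_integral_sq_le_add (memLp_two_ballSupport hK₁cone hμ)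
    (memLp_two_ballSupport hK₂cone hμ)
    (ae_of_all _ fun g => mul_nonneg (Real.sqrt_nonneg β) (hS0 g))
    (ae_of_all _ (sqrt_mul_ballSupport_add_le hK₁cone hK₂cone hβ hsep))
  rw [sqrt_integral_mul_sq (Real.sqrt_nonneg β)] at h
  simp only [statDim_eq_integral_ballSupport_sq]
  exact (le_div_iff₀' (Real.sqrt_pos.2 hβ.1)).2 h

/-- If `cos∠(−K₁, K₂) ≤ 1 − β`, then
`√δ(K₁+K₂) ≤ (√δ(K₁) + √δ(K₂))/√β`. -/
theorem statDim_sum_bound {n : ℕ} (K₁ K₂ : Set (EuclideanSpace ℝ (Fin n)))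
    (hK₁c : IsClosed K₁) (hK₂c : IsClosed K₂)
    (hK₁conv : Convex ℝ K₁) (hK₂conv : Convex ℝ K₂)
    (hK₁cone : ∀ c : ℝ, 0 ≤ c → ∀ x ∈ K₁, c • x ∈ K₁)
    (hK₂cone : ∀ c : ℝ, 0 ≤ c → ∀ x ∈ K₂, c • x ∈ K₂)
    (β : ℝ) (hβ : β ∈ Set.Ioc (0 : ℝ) 1)
    (hangle : ∀ u v, u ∈ -K₁ → v ∈ K₂ → ‖u‖ = 1 → ‖v‖ = 1 → ⟪u, v⟫ ≤ 1 - β) :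
    Real.sqrt (statDim (K₁ + K₂)) ≤
      (Real.sqrt (statDim K₁) + Real.sqrt (statDim K₂)) / Real.sqrt β :=
  statDim_sum_bound_general K₁ K₂ hK₁cone hK₂cone β hβ hangle
end

section
/- Let A1, A2 ⊆ R^n be compact sets containing the origin in their interiors, and let x1, x2 ∈ R^n satisfy γ_{A1}(x1) = γ_{A2}(x2). Then D(A1 + A2, x1 + x2) ⊆ D(A1, x1) + D(A2, x2). -/
open scoped Pointwise

open MeasureTheory ProbabilityTheory Set
open scoped RealInnerProductSpace

/-- For a convex neighborhood of 0 and `a > 0`, the sublevel set of the gauge at level `a`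
is `a • closure K`. -/
lemma gauge_le_iff_mem_smul_closure {E : Type*} [NormedAddCommGroup E] [NormedSpace ℝ E]
    {K : Set E} (hK : Convex ℝ K) (h0 : K ∈ nhds 0) {a : ℝ} (ha : 0 < a) (z : E) :
    gauge K z ≤ a ↔ z ∈ a • closure K := by
  rw [mem_smul_set_iff_inv_smul_mem₀ ha.ne', ← gauge_le_one_iff_mem_closure hK h0,
    gauge_smul_of_nonneg (inv_nonneg.2 ha.le), smul_eq_mul, inv_mul_le_iff₀ ha, mul_one]

/-- If `γ_{A₁}(x₁) = γ_{A₂}(x₂)`, then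
`D(A₁+A₂, x₁+x₂) ⊆ D(A₁, x₁) + D(A₂, x₂)`. -/
theorem descCone_sum_subset {n : ℕ} (A₁ A₂ : Set (EuclideanSpace ℝ (Fin n)))
    (hA₁ : IsCompact A₁) (hA₂ : IsCompact A₂)
    (h₁0 : (0 : EuclideanSpace ℝ (Fin n)) ∈ interior A₁)
    (h₂0 : (0 : EuclideanSpace ℝ (Fin n)) ∈ interior A₂)
    (x₁ x₂ : EuclideanSpace ℝ (Fin n))
    (hgauge : agauge A₁ x₁ = agauge A₂ x₂) :
    descCone (A₁ + A₂) (x₁ + x₂) ⊆ descCone A₁ x₁ + descCone A₂ x₂ := by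
  classical
  have h₁A : (0 : EuclideanSpace ℝ (Fin n)) ∈ A₁ := interior_subset h₁0
  have h₂A : (0 : EuclideanSpace ℝ (Fin n)) ∈ A₂ := interior_subset h₂0
  have e₁ : insert (0 : EuclideanSpace ℝ (Fin n)) A₁ = A₁ := insert_eq_self.2 h₁A
  have e₂ : insert (0 : EuclideanSpace ℝ (Fin n)) A₂ = A₂ := insert_eq_self.2 h₂A
  have e₃ : insert (0 : EuclideanSpace ℝ (Fin n)) (A₁ + A₂) = A₁ + A₂ :=
    insert_eq_self.2 (by simpa using add_mem_add h₁A h₂A)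
  set K₁ := convexHull ℝ A₁ with hK₁def
  set K₂ := convexHull ℝ A₂ with hK₂def
  have hsum : convexHull ℝ (A₁ + A₂) = K₁ + K₂ := convexHull_add _ _
  have ag₁ : ∀ y, agauge A₁ y = gauge K₁ y := fun y => by rw [agauge, e₁]
  have ag₂ : ∀ y, agauge A₂ y = gauge K₂ y := fun y => by rw [agauge, e₂]
  have ag₁₂ : ∀ y, agauge (A₁ + A₂) y = gauge (K₁ + K₂) y := fun y => by
    rw [agauge, e₃, hsum]
  have hK₁c : Convex ℝ K₁ := convex_convexHull ℝ A₁
  have hK₂c : Convex ℝ K₂ := convex_convexHull ℝ A₂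
  have hK₁₂c : Convex ℝ (K₁ + K₂) := hK₁c.add hK₂c
  have h0K₁ : (0 : EuclideanSpace ℝ (Fin n)) ∈ K₁ := subset_convexHull ℝ A₁ h₁A
  have h0K₂ : (0 : EuclideanSpace ℝ (Fin n)) ∈ K₂ := subset_convexHull ℝ A₂ h₂A
  have hK₁0 : K₁ ∈ nhds (0 : EuclideanSpace ℝ (Fin n)) :=
    mem_interior_iff_mem_nhds.1 (interior_mono (subset_convexHull ℝ A₁) h₁0)
  have hK₂0 : K₂ ∈ nhds (0 : EuclideanSpace ℝ (Fin n)) :=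
    mem_interior_iff_mem_nhds.1 (interior_mono (subset_convexHull ℝ A₂) h₂0)
  have hK₁₂0 : K₁ + K₂ ∈ nhds (0 : EuclideanSpace ℝ (Fin n)) :=
    Filter.mem_of_superset hK₁0 (fun x hx => by simpa using add_mem_add hx h0K₂)
  have hb₁ : Bornology.IsBounded K₁ := isBounded_convexHull.2 hA₁.isBounded
  have hb₂ : Bornology.IsBounded K₂ := isBounded_convexHull.2 hA₂.isBounded
  have hcomp₁ : IsCompact (closure K₁) :=
    Metric.isCompact_of_isClosed_isBounded isClosed_closure hb₁.closure
  have hcomp₂ : IsCompact (closure K₂) :=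
    Metric.isCompact_of_isClosed_isBounded isClosed_closure hb₂.closure
  have hclsub : closure (K₁ + K₂) ⊆ closure K₁ + closure K₂ :=
    closure_minimal (add_subset_add subset_closure subset_closure) (hcomp₁.add hcomp₂).isClosed
  have hclsup : closure K₁ + closure K₂ ⊆ closure (K₁ + K₂) := by
    rintro _ ⟨a, ha, b, hb, rfl⟩
    exact map_mem_closure₂ continuous_add ha hb (fun x hx y hy => add_mem_add hx hy)
  rintro d ⟨c, s, hc, hle, rfl⟩
  rw [ag₁₂, ag₁₂] at hle
  set g := gauge K₁ x₁ with hg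
  have hg₂ : gauge K₂ x₂ = g := by rw [← ag₂, ← hgauge, ag₁]
  have hg0 : 0 ≤ g := gauge_nonneg _
  rcases hg0.eq_or_lt with h0 | hpos
  · -- degenerate case g = 0 : then x₁ = x₂ = 0 and s = 0
    have hvb₁ : Bornology.IsVonNBounded ℝ K₁ := NormedSpace.isVonNBounded_iff ℝ |>.2 hb₁
    have hvb₂ : Bornology.IsVonNBounded ℝ K₂ := NormedSpace.isVonNBounded_iff ℝ |>.2 hb₂
    have hvb₁₂ : Bornology.IsVonNBounded ℝ (K₁ + K₂) :=
      NormedSpace.isVonNBounded_iff ℝ |>.2 (hb₁.add hb₂)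
    have hx₁ : x₁ = 0 := (gauge_eq_zero (absorbent_nhds_zero hK₁0) hvb₁).1 h0.symm
    have hx₂ : x₂ = 0 := (gauge_eq_zero (absorbent_nhds_zero hK₂0) hvb₂).1 (hg₂.trans h0.symm)
    have hs0 : s = 0 := by
      refine (gauge_eq_zero (absorbent_nhds_zero hK₁₂0) hvb₁₂).1 (le_antisymm ?_ (gauge_nonneg _))
      have := hle
      rw [hx₁, hx₂] at this
      simpa [gauge_zero] using this
    refine mem_add.2 ⟨0, ⟨0, 0, le_refl 0, by simp, by simp⟩,
      0, ⟨0, 0, le_refl 0, by simp, by simp⟩, by simp [hs0]⟩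
  · -- main case g > 0
    have key₁ := fun z => gauge_le_iff_mem_smul_closure hK₁c hK₁0 hpos z
    have key₂ := fun z => gauge_le_iff_mem_smul_closure hK₂c hK₂0 hpos z
    have key₁₂ := fun z => gauge_le_iff_mem_smul_closure hK₁₂c hK₁₂0 hpos z
    have hx₁m : x₁ ∈ g • closure K₁ := (key₁ x₁).1 (le_of_eq hg.symm)
    have hx₂m : x₂ ∈ g • closure K₂ := (key₂ x₂).1 (le_of_eq hg₂)
    have hsum_le : gauge (K₁ + K₂) (x₁ + x₂) ≤ g := by
      refine (key₁₂ (x₁ + x₂)).2 ?_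
      obtain ⟨k₁, hk₁, hk₁e⟩ := hx₁m
      obtain ⟨k₂, hk₂, hk₂e⟩ := hx₂m
      exact ⟨k₁ + k₂, hclsup (add_mem_add hk₁ hk₂), by simp only []; rw [smul_add]; simp only at hk₁e hk₂e; rw [hk₁e, hk₂e]⟩
    have hz : x₁ + x₂ + s ∈ g • closure (K₁ + K₂) := (key₁₂ _).1 (hle.trans hsum_le)
    obtain ⟨w, hw, hzw⟩ := hz
    obtain ⟨w₁, hw₁, w₂, hw₂, rfl⟩ := hclsub hw
    have hzw' : g • w₁ + g • w₂ = x₁ + x₂ + s := by rw [← smul_add]; exact hzw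
    have hs : g • w₁ - x₁ + (g • w₂ - x₂) = s := by
      rw [sub_add_sub_comm, hzw', add_sub_cancel_left]
    refine mem_add.2 ⟨c • (g • w₁ - x₁), ⟨c, g • w₁ - x₁, hc, ?_, rfl⟩,
      c • (g • w₂ - x₂), ⟨c, g • w₂ - x₂, hc, ?_, rfl⟩, ?_⟩
    · rw [ag₁, ag₁, add_sub_cancel]
      exact (key₁ _).2 (smul_mem_smul_set hw₁)
    · rw [ag₂, ag₂, add_sub_cancel]
      refine le_trans ((key₂ _).2 (smul_mem_smul_set hw₂)) (le_of_eq hg₂.symm)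
    · rw [← smul_add, hs]
end
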